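/- For any seminormal quasi-crystal Q of type Φ, the free ⊗̈-quasi-crystal monoid F^⊗̈(Q) is a ⊗̈-quasi-crystal monoid of type Φ: the given structure maps make Q* a seminormal quasi-crystal, and the map u ⊗̈ v ↦ uv induces a quasi-crystal homomorphism from F^⊗̈(Q) ⊗̈ F^⊗̈(Q) to F^⊗̈(Q). -/

import Mathlib

/-! ## Root system setting -/

/-- The data of a root system `Φ` in a Euclidean space `V`, together with a choice of
simple roots `(α_i)_{i ∈ ι}` and a weight lattice `Λ`, with the integer-valued coroot
pairing `pair λ i = ⟨λ, α_i^∨⟩ = 2⟪λ, α_i⟫/⟪α_i, α_i⟫` on the weight lattice. -/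
structure QCSetting (V : Type*) [NormedAddCommGroup V] [InnerProductSpace ℝ V]
    (ι : Type*) where
  Φ : Set V
  finite : Φ.Finite
  nonempty : Φ.Nonempty
  zero_not_mem : (0 : V) ∉ Φ
  reflect_mem : ∀ a ∈ Φ, ∀ b ∈ Φ, b - (2 * (inner ℝ b a : ℝ) / (inner ℝ a a : ℝ)) • a ∈ Φ
  smul_root : ∀ a ∈ Φ, ∀ k : ℝ, k • a ∈ Φ → k = 1 ∨ k = -1
  simple : ι → V
  simple_mem : ∀ i, simple i ∈ Φ
  simple_indep : LinearIndependent ℝ simple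
  Λ : AddSubgroup V
  lattice_spans : Submodule.span ℝ (Λ : Set V) = ⊤
  root_mem_lattice : ∀ a ∈ Φ, a ∈ Λ
  pair : Λ → ι → ℤ
  pair_spec : ∀ (v : Λ) (i : ι),
    (pair v i : ℝ) = 2 * (inner ℝ (v : V) (simple i) : ℝ) / (inner ℝ (simple i) (simple i) : ℝ)

variable {V : Type*} [NormedAddCommGroup V] [InnerProductSpace ℝ V] {ι : Type*}

/-! ## Quasi-crystals -/

/-- The structure maps of a quasi-crystal of type `S` on an underlying set `Q`:
a weight map `wt` with values in the weight lattice, partial quasi-Kashiwara operators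
`e i, f i : Q → Q ⊔ {⊥}` (realized as `Option`-valued maps, `none` playing the role
of `⊥`), and maps `ε i, φ i : Q → ℤ ∪ {+∞}` (realized as `WithTop ℤ`). -/
structure QC (S : QCSetting V ι) (Q : Type*) where
  wt : Q → S.Λ
  e : ι → Q → Option Q
  f : ι → Q → Option Q
  ε : ι → Q → WithTop ℤ
  φ : ι → Q → WithTop ℤ

/-- `k`-fold iteration of a partial map `g : Q → Option Q` starting at `x`. -/
def optIter {Q : Type*} (g : Q → Option Q) (k : ℕ) (x : Q) : Option Q :=
  (fun o => o.bind g)^[k] (some x)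

/-- The axioms of a seminormal quasi-crystal. -/
structure QC.IsSeminormal {S : QCSetting V ι} {Q : Type*} (𝒬 : QC S Q) : Prop where
  phi_eq : ∀ i x, 𝒬.φ i x = 𝒬.ε i x + ((S.pair (𝒬.wt x) i : ℤ) : WithTop ℤ)
  wt_e : ∀ i x y, 𝒬.e i x = some y → (𝒬.wt y : V) = (𝒬.wt x : V) + S.simple i
  wt_f : ∀ i x y, 𝒬.f i x = some y → (𝒬.wt y : V) = (𝒬.wt x : V) - S.simple i
  e_iff_f : ∀ i x y, 𝒬.e i x = some y ↔ 𝒬.f i y = some x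
  e_of_top : ∀ i x, 𝒬.ε i x = ⊤ → 𝒬.e i x = none
  f_of_top : ∀ i x, 𝒬.ε i x = ⊤ → 𝒬.f i x = none
  eps_spec : ∀ i x, 𝒬.ε i x ≠ ⊤ → ∃ n : ℕ, 𝒬.ε i x = ((n : ℤ) : WithTop ℤ) ∧
    IsGreatest {k : ℕ | (optIter (𝒬.e i) k x).isSome} n
  phi_spec : ∀ i x, 𝒬.ε i x ≠ ⊤ → ∃ n : ℕ, 𝒬.φ i x = ((n : ℤ) : WithTop ℤ) ∧
    IsGreatest {k : ℕ | (optIter (𝒬.f i) k x).isSome} n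

/-- A seminormal crystal is a seminormal quasi-crystal in which `ε i x ≠ +∞` always. -/
def QC.IsSeminormalCrystal {S : QCSetting V ι} {Q : Type*} (𝒬 : QC S Q) : Prop :=
  𝒬.IsSeminormal ∧ ∀ i x, 𝒬.ε i x ≠ ⊤

/-! ## Tensor product -/

/-- The tensor product of two quasi-crystals of the same type. -/
noncomputable def QC.tensor {S : QCSetting V ι} {Q Q' : Type*} (𝒬 : QC S Q) (𝒬' : QC S Q') :
    QC S (Q × Q') where
  wt p := 𝒬.wt p.1 + 𝒬'.wt p.2
  ε i p := max (𝒬.ε i p.1) (𝒬'.ε i p.2 + ((-(S.pair (𝒬.wt p.1) i) : ℤ) : WithTop ℤ))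
  φ i p := max (𝒬.φ i p.1 + ((S.pair (𝒬'.wt p.2) i : ℤ) : WithTop ℤ)) (𝒬'.φ i p.2)
  e i p := if 𝒬'.ε i p.2 ≤ 𝒬.φ i p.1
    then (𝒬.e i p.1).map (fun y => (y, p.2))
    else (𝒬'.e i p.2).map (fun y => (p.1, y))
  f i p := if 𝒬'.ε i p.2 < 𝒬.φ i p.1
    then (𝒬.f i p.1).map (fun y => (y, p.2))
    else (𝒬'.f i p.2).map (fun y => (p.1, y))

/-! ## Quasi-tensor product -/

/-- The (inverse-free) quasi-tensor product of two quasi-crystals of the same type. -/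
noncomputable def QC.qtensor {S : QCSetting V ι} {Q Q' : Type*} (𝒬 : QC S Q) (𝒬' : QC S Q') :
    QC S (Q × Q') where
  wt p := 𝒬.wt p.1 + 𝒬'.wt p.2
  ε i p := if 0 < 𝒬.φ i p.1 ∧ 0 < 𝒬'.ε i p.2 then ⊤
    else max (𝒬.ε i p.1) (𝒬'.ε i p.2 + ((-(S.pair (𝒬.wt p.1) i) : ℤ) : WithTop ℤ))
  φ i p := if 0 < 𝒬.φ i p.1 ∧ 0 < 𝒬'.ε i p.2 then ⊤
    else max (𝒬.φ i p.1 + ((S.pair (𝒬'.wt p.2) i : ℤ) : WithTop ℤ)) (𝒬'.φ i p.2)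
  e i p := if 0 < 𝒬.φ i p.1 ∧ 0 < 𝒬'.ε i p.2 then none
    else if 𝒬'.ε i p.2 ≤ 𝒬.φ i p.1 then (𝒬.e i p.1).map (fun y => (y, p.2))
    else (𝒬'.e i p.2).map (fun y => (p.1, y))
  f i p := if 0 < 𝒬.φ i p.1 ∧ 0 < 𝒬'.ε i p.2 then none
    else if 𝒬'.ε i p.2 < 𝒬.φ i p.1 then (𝒬.f i p.1).map (fun y => (y, p.2))
    else (𝒬'.f i p.2).map (fun y => (p.1, y))

/-! ## Homomorphisms -/

/-- A quasi-crystal homomorphism `ψ : 𝒬 → 𝒬'`, i.e. a map `Q ⊔ {⊥} → Q' ⊔ {⊥}`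
(realized on `Option`s, `none` playing the role of `⊥`) compatible with the structure
maps in the appropriate sense. -/
structure QCHom {S : QCSetting V ι} {Q Q' : Type*} (𝒬 : QC S Q) (𝒬' : QC S Q') where
  toFun : Option Q → Option Q'
  map_none : toFun none = none
  wt_eq : ∀ x y, toFun (some x) = some y → 𝒬'.wt y = 𝒬.wt x
  eps_eq : ∀ i x y, toFun (some x) = some y → 𝒬'.ε i y = 𝒬.ε i x
  phi_eq : ∀ i x y, toFun (some x) = some y → 𝒬'.φ i y = 𝒬.φ i x
  comm_e : ∀ i x x' y y', 𝒬.e i x = some x' → toFun (some x) = some y →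
    toFun (some x') = some y' → 𝒬'.e i y = some y'
  comm_f : ∀ i x x' y y', 𝒬.f i x = some x' → toFun (some x) = some y →
    toFun (some x') = some y' → 𝒬'.f i y = some y'

/-! ## The free `⊗`-quasi-crystal monoid -/

/-- Weight of a word: the sum of the weights of its letters. -/
def freeWt {S : QCSetting V ι} {Q : Type*} (𝒬 : QC S Q) : List Q → S.Λ
  | [] => 0
  | x :: w => 𝒬.wt x + freeWt 𝒬 w

/-- The map `ε̈_i` of the free `⊗`-quasi-crystal monoid. -/
def freeEps {S : QCSetting V ι} {Q : Type*} (𝒬 : QC S Q) (i : ι) : List Q → WithTop ℤ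
  | [] => 0
  | x :: w => max (𝒬.ε i x) (freeEps 𝒬 i w + ((-(S.pair (𝒬.wt x) i) : ℤ) : WithTop ℤ))

/-- The map `φ̈_i` of the free `⊗`-quasi-crystal monoid. -/
def freePhi {S : QCSetting V ι} {Q : Type*} (𝒬 : QC S Q) (i : ι) : List Q → WithTop ℤ
  | [] => 0
  | x :: w => max (𝒬.φ i x + ((S.pair (freeWt 𝒬 w) i : ℤ) : WithTop ℤ)) (freePhi 𝒬 i w)

/-- The operator `ë_i` of the free `⊗`-quasi-crystal monoid. -/
noncomputable def freeE {S : QCSetting V ι} {Q : Type*} (𝒬 : QC S Q) (i : ι) : List Q → Option (List Q)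
  | [] => none
  | x :: w => if freeEps 𝒬 i w ≤ 𝒬.φ i x
      then (𝒬.e i x).map (· :: w)
      else (freeE 𝒬 i w).map (x :: ·)

/-- The operator `f̈_i` of the free `⊗`-quasi-crystal monoid. -/
noncomputable def freeF {S : QCSetting V ι} {Q : Type*} (𝒬 : QC S Q) (i : ι) : List Q → Option (List Q)
  | [] => none
  | x :: w => if freeEps 𝒬 i w < 𝒬.φ i x
      then (𝒬.f i x).map (· :: w)
      else (freeF 𝒬 i w).map (x :: ·)

/-- The quasi-crystal structure of the free `⊗`-quasi-crystal monoid `F^⊗(𝒬)`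
on the free monoid `Q*`. -/
noncomputable def freeTensorQC {S : QCSetting V ι} {Q : Type*} (𝒬 : QC S Q) : QC S (FreeMonoid Q) where
  wt w := freeWt 𝒬 (FreeMonoid.toList w)
  ε i w := freeEps 𝒬 i (FreeMonoid.toList w)
  φ i w := freePhi 𝒬 i (FreeMonoid.toList w)
  e i w := (freeE 𝒬 i (FreeMonoid.toList w)).map (fun l => FreeMonoid.ofList l)
  f i w := (freeF 𝒬 i (FreeMonoid.toList w)).map (fun l => FreeMonoid.ofList l)

/-! ## The free `⊗̈`-quasi-crystal monoid -/

/-- The map `ε̈_i` of the free `⊗̈`-quasi-crystal monoid. -/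
noncomputable def qfreeEps {S : QCSetting V ι} {Q : Type*} (𝒬 : QC S Q) (i : ι) : List Q → WithTop ℤ
  | [] => 0
  | x :: w => if 0 < 𝒬.φ i x ∧ 0 < qfreeEps 𝒬 i w then ⊤
      else max (𝒬.ε i x) (qfreeEps 𝒬 i w + ((-(S.pair (𝒬.wt x) i) : ℤ) : WithTop ℤ))

/-- The map `φ̈_i` of the free `⊗̈`-quasi-crystal monoid. -/
noncomputable def qfreePhi {S : QCSetting V ι} {Q : Type*} (𝒬 : QC S Q) (i : ι) : List Q → WithTop ℤ
  | [] => 0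
  | x :: w => if 0 < 𝒬.φ i x ∧ 0 < qfreeEps 𝒬 i w then ⊤
      else max (𝒬.φ i x + ((S.pair (freeWt 𝒬 w) i : ℤ) : WithTop ℤ)) (qfreePhi 𝒬 i w)

/-- The operator `ë_i` of the free `⊗̈`-quasi-crystal monoid. -/
noncomputable def qfreeE {S : QCSetting V ι} {Q : Type*} (𝒬 : QC S Q) (i : ι) : List Q → Option (List Q)
  | [] => none
  | x :: w => if 0 < 𝒬.φ i x ∧ 0 < qfreeEps 𝒬 i w then none
      else if qfreeEps 𝒬 i w ≤ 𝒬.φ i x then (𝒬.e i x).map (· :: w)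
      else (qfreeE 𝒬 i w).map (x :: ·)

/-- The operator `f̈_i` of the free `⊗̈`-quasi-crystal monoid. -/
noncomputable def qfreeF {S : QCSetting V ι} {Q : Type*} (𝒬 : QC S Q) (i : ι) : List Q → Option (List Q)
  | [] => none
  | x :: w => if 0 < 𝒬.φ i x ∧ 0 < qfreeEps 𝒬 i w then none
      else if qfreeEps 𝒬 i w < 𝒬.φ i x then (𝒬.f i x).map (· :: w)
      else (qfreeF 𝒬 i w).map (x :: ·)

/-- The quasi-crystal structure of the free `⊗̈`-quasi-crystal monoid `F^⊗̈(𝒬)`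
on the free monoid `Q*`. -/
noncomputable def freeQTensorQC {S : QCSetting V ι} {Q : Type*} (𝒬 : QC S Q) : QC S (FreeMonoid Q) where
  wt w := freeWt 𝒬 (FreeMonoid.toList w)
  ε i w := qfreeEps 𝒬 i (FreeMonoid.toList w)
  φ i w := qfreePhi 𝒬 i (FreeMonoid.toList w)
  e i w := (qfreeE 𝒬 i (FreeMonoid.toList w)).map (fun l => FreeMonoid.ofList l)
  f i w := (qfreeF 𝒬 i (FreeMonoid.toList w)).map (fun l => FreeMonoid.ofList l)

/-! ## Connected components, plactic and hypoplactic congruences -/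

/-- Two elements are connected in the quasi-crystal graph if they are related by the
reflexive-symmetric-transitive closure of the edge relation given by the
quasi-Kashiwara operators. -/
def QC.conn {S : QCSetting V ι} {Q : Type*} (𝒬 : QC S Q) : Q → Q → Prop :=
  Relation.EqvGen (fun x y => ∃ i, 𝒬.f i x = some y ∨ 𝒬.f i y = some x ∨
    𝒬.e i x = some y ∨ 𝒬.e i y = some x)

/-- The connected component `𝒬(x)` of a quasi-crystal `𝒬` containing `x`, as a
quasi-crystal on the subtype of elements connected with `x`. -/
def QC.compQC {S : QCSetting V ι} {Q : Type*} (𝒬 : QC S Q) (x : Q) :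
    QC S {y : Q // 𝒬.conn x y} where
  wt y := 𝒬.wt y.1
  ε i y := 𝒬.ε i y.1
  φ i y := 𝒬.φ i y.1
  e i y := (𝒬.e i y.1).pmap (fun z hz => (⟨z, hz⟩ : {y : Q // 𝒬.conn x y}))
    (fun z hz => Relation.EqvGen.trans _ _ _ y.2
      (Relation.EqvGen.rel _ _ ⟨i, Or.inr (Or.inr (Or.inl hz))⟩))
  f i y := (𝒬.f i y.1).pmap (fun z hz => (⟨z, hz⟩ : {y : Q // 𝒬.conn x y}))
    (fun z hz => Relation.EqvGen.trans _ _ _ y.2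
      (Relation.EqvGen.rel _ _ ⟨i, Or.inl hz⟩))

/-- The plactic congruence: `u ≈ v` iff there is a quasi-crystal isomorphism between the
connected components of `u` and `v` in `F^⊗(𝒬)` mapping `u` to `v`. -/
def placticRel {S : QCSetting V ι} {Q : Type*} (𝒬 : QC S Q)
    (u v : FreeMonoid Q) : Prop :=
  ∃ ψ : QCHom ((freeTensorQC 𝒬).compQC u) ((freeTensorQC 𝒬).compQC v),
    Function.Bijective ψ.toFun ∧
    ψ.toFun (some ⟨u, Relation.EqvGen.refl u⟩) = some ⟨v, Relation.EqvGen.refl v⟩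

/-- The hypoplactic congruence: `u ∼̈ v` iff there is a quasi-crystal isomorphism between
the connected components of `u` and `v` in `F^⊗̈(𝒬)` mapping `u` to `v`. -/
def hypoRel {S : QCSetting V ι} {Q : Type*} (𝒬 : QC S Q)
    (u v : FreeMonoid Q) : Prop :=
  ∃ ψ : QCHom ((freeQTensorQC 𝒬).compQC u) ((freeQTensorQC 𝒬).compQC v),
    Function.Bijective ψ.toFun ∧
    ψ.toFun (some ⟨u, Relation.EqvGen.refl u⟩) = some ⟨v, Relation.EqvGen.refl v⟩

/-! ## Quasi-crystal monoids -/

/-- A monoid is equidivisible if whenever `x₁y₁ = x₂y₂` one of the factorizations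
refines the other. -/
def Equidivisible (M : Type*) [Monoid M] : Prop :=
  ∀ x₁ x₂ y₁ y₂ : M, x₁ * y₁ = x₂ * y₂ →
    ∃ z : M, (x₂ = x₁ * z ∧ y₁ = z * y₂) ∨ (x₁ = x₂ * z ∧ y₂ = z * y₁)

/-- A `⊗`-quasi-crystal monoid: a seminormal quasi-crystal structure on a monoid whose
structure maps interact with the multiplication by the tensor-product rules. -/
structure IsTensorQCMon {S : QCSetting V ι} {M : Type*} [Monoid M] (𝒬 : QC S M) : Prop where
  seminormal : 𝒬.IsSeminormal
  wt_mul : ∀ x y, 𝒬.wt (x * y) = 𝒬.wt x + 𝒬.wt y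
  eps_mul : ∀ i x y, 𝒬.ε i (x * y) =
    max (𝒬.ε i x) (𝒬.ε i y + ((-(S.pair (𝒬.wt x) i) : ℤ) : WithTop ℤ))
  phi_mul : ∀ i x y, 𝒬.φ i (x * y) =
    max (𝒬.φ i x + ((S.pair (𝒬.wt y) i : ℤ) : WithTop ℤ)) (𝒬.φ i y)
  e_mul : ∀ i x y, 𝒬.e i (x * y) =
    if 𝒬.ε i y ≤ 𝒬.φ i x then (𝒬.e i x).map (· * y) else (𝒬.e i y).map (x * ·)
  f_mul : ∀ i x y, 𝒬.f i (x * y) =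
    if 𝒬.ε i y < 𝒬.φ i x then (𝒬.f i x).map (· * y) else (𝒬.f i y).map (x * ·)

/-- A `⊗̈`-quasi-crystal monoid: a seminormal quasi-crystal structure on a monoid such
that `x ⊗̈ y ↦ x·y` induces a quasi-crystal homomorphism `M ⊗̈ M → M`. -/
def IsQTensorQCMon {S : QCSetting V ι} {M : Type*} [Monoid M] (𝒬 : QC S M) : Prop :=
  𝒬.IsSeminormal ∧
  ∃ ψ : QCHom (𝒬.qtensor 𝒬) 𝒬, ψ.toFun = Option.map (fun p => p.1 * p.2)

/-! ## The bicyclic monoid with zero `B₀` and the monoid `Z₀` -/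

/-- The bicyclic monoid `⟨−, + | (+)(−) = ε⟩`: elements are normal forms `(−)^a(+)^b`. -/
structure Bic where
  neg : ℕ
  pos : ℕ
deriving DecidableEq

instance : Mul Bic :=
  ⟨fun x y => ⟨x.neg + (y.neg - x.pos), y.pos + (x.pos - y.neg)⟩⟩

theorem Bic.mul_def (x y : Bic) :
    x * y = ⟨x.neg + (y.neg - x.pos), y.pos + (x.pos - y.neg)⟩ := rfl

instance : One Bic := ⟨⟨0, 0⟩⟩

theorem Bic.one_def : (1 : Bic) = ⟨0, 0⟩ := rfl

instance : Monoid Bic where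
  mul_assoc x y z := by
    simp only [Bic.mul_def, Bic.mk.injEq]
    omega
  one_mul x := by
    simp only [Bic.one_def, Bic.mul_def]
    cases x
    simp only [Bic.mk.injEq]
    omega
  mul_one x := by
    simp only [Bic.one_def, Bic.mul_def]
    cases x
    simp only [Bic.mk.injEq]
    omega

/-- The bicyclic monoid with a zero element adjoined,
`B₀ = ⟨0, −, + | (+)(−) = ε, 0x = x0 = 0⟩`. -/
abbrev B0 : Type := WithZero Bic

/-- The monoid `Z₀ = ⟨0, −, + | (+)(−) = 0, 0x = x0 = 0⟩`: the nonzero elements are the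
normal forms `(−)^a(+)^b`. -/
inductive Z0 : Type
  | zero : Z0
  | word : ℕ → ℕ → Z0
deriving DecidableEq

instance : Mul Z0 :=
  ⟨fun x y => match x, y with
    | Z0.zero, _ => Z0.zero
    | _, Z0.zero => Z0.zero
    | Z0.word a b, Z0.word c d =>
        if 0 < b ∧ 0 < c then Z0.zero else Z0.word (a + c) (b + d)⟩

instance : One Z0 := ⟨Z0.word 0 0⟩

instance : Zero Z0 := ⟨Z0.zero⟩

theorem Z0.one_def : (1 : Z0) = Z0.word 0 0 := rfl
theorem Z0.zero_def : (0 : Z0) = Z0.zero := rfl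
theorem Z0.zero_mul' (x : Z0) : Z0.zero * x = Z0.zero := by cases x <;> rfl
theorem Z0.mul_zero' (x : Z0) : x * Z0.zero = Z0.zero := by cases x <;> rfl
theorem Z0.word_mul_word (a b c d : ℕ) :
    Z0.word a b * Z0.word c d =
      if 0 < b ∧ 0 < c then Z0.zero else Z0.word (a + c) (b + d) := rfl

instance : MonoidWithZero Z0 where
  mul_assoc x y z := by
    cases x <;> cases y <;> cases z <;>
      simp only [Z0.zero_mul', Z0.mul_zero', Z0.word_mul_word]
    · split_ifs <;> simp_all [Z0.zero_mul', Z0.mul_zero', Z0.word_mul_word] <;>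
        split_ifs <;> simp_all <;> omega
  one_mul x := by
    cases x
    · rfl
    · simp [Z0.one_def, Z0.word_mul_word]
  mul_one x := by
    cases x
    · rfl
    · simp [Z0.one_def, Z0.word_mul_word]
  zero_mul x := by cases x <;> rfl
  mul_zero x := by cases x <;> rfl

/-! ## Signature maps -/

/-- The `i`-signature map for the tensor product `⊗`:
`sgn_i^⊗(w) = 0` if `ε̈_i(w) = +∞`, and `(−)^{ε̈_i(w)}(+)^{φ̈_i(w)}` otherwise. -/
noncomputable def tsgn {V : Type*} [NormedAddCommGroup V] [InnerProductSpace ℝ V] {ι : Type*}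
    {S : QCSetting V ι} {Q : Type*} (𝒬 : QC S Q) (i : ι) (w : FreeMonoid Q) : B0 :=
  if freeEps 𝒬 i (FreeMonoid.toList w) = ⊤ then 0
  else ↑(Bic.mk (WithTop.untopD 0 (freeEps 𝒬 i (FreeMonoid.toList w))).toNat
      (WithTop.untopD 0 (freePhi 𝒬 i (FreeMonoid.toList w))).toNat)

/-- The `i`-signature map for the quasi-tensor product `⊗̈`:
`sgn_i^⊗̈(w) = 0` if `ε̈_i(w) = +∞`, and `(−)^{ε̈_i(w)}(+)^{φ̈_i(w)}` otherwise. -/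
noncomputable def qsgn {V : Type*} [NormedAddCommGroup V] [InnerProductSpace ℝ V] {ι : Type*}
    {S : QCSetting V ι} {Q : Type*} (𝒬 : QC S Q) (i : ι) (w : FreeMonoid Q) : Z0 :=
  if qfreeEps 𝒬 i (FreeMonoid.toList w) = ⊤ then 0
  else Z0.word (WithTop.untopD 0 (qfreeEps 𝒬 i (FreeMonoid.toList w))).toNat
      (WithTop.untopD 0 (qfreePhi 𝒬 i (FreeMonoid.toList w))).toNat


/-! By seminormality, `ε̈` and `φ̈` are nonnegative and `φ̈ = ε̈ + ⟨wt, α^∨⟩`, so outside the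
blocked case `φ̈ᵢ(u) > 0 < ε̈ᵢ(v)` the max-formulas of `⊗̈` collapse to `ε̈(uv) = ε̈(u) + ε̈(v)` and
`φ̈(uv) = φ̈(u) + φ̈(v)`, and `ë(uv)` acts on `u` when `ε̈(v) = 0`, on `v` when `φ̈(u) = 0`. These
rules are associative, so by induction on `u` they hold for every concatenation `uv`: the
multiplication is a strict morphism `F ⊗̈ F → F`. Seminormality of `F^⊗̈(Q)` is then checked one
step at a time: `ë` lowers `ε̈` by one, `f̈` lowers `φ̈` by one, they are mutually inverse, and `ë`
(resp. `f̈`) is defined exactly when `ε̈` (resp. `φ̈`) is positive and `ε̈` finite; these local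
conditions force `ε̈` and `φ̈` to be the lengths of the `ë`- and `f̈`-strings. -/

section OptIter

variable {α : Type*} {g : α → Option α}

theorem optIter_succ_of_eq_some {x y : α} (hxy : g x = some y) (k : ℕ) :
    optIter g (k + 1) x = optIter g k y := by
  simp [optIter, Function.iterate_succ_apply, hxy]

theorem optIter_succ_of_eq_none {x : α} (hx : g x = none) (k : ℕ) :
    optIter g (k + 1) x = none := by
  simp only [optIter, Function.iterate_succ_apply, Option.bind_some, hx]
  exact Function.iterate_fixed rfl k

theorem isGreatest_optIter_zero_iff {x : α} :
    IsGreatest {k | (optIter g k x).isSome} 0 ↔ g x = none := by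
  refine ⟨fun h => ?_, fun hx => ⟨rfl, fun k hk => ?_⟩⟩
  · by_contra hx
    obtain ⟨y, hy⟩ := Option.ne_none_iff_exists'.mp hx
    have : 1 ∈ {k | (optIter g k x).isSome} := by simp [optIter, hy]
    exact absurd (h.2 this) (by decide)
  · cases k with
    | zero => rfl
    | succ k => simp [optIter_succ_of_eq_none hx] at hk

theorem isGreatest_optIter_succ_iff {x y : α} (hxy : g x = some y) {n : ℕ} :
    IsGreatest {k | (optIter g k x).isSome} (n + 1) ↔
      IsGreatest {k | (optIter g k y).isSome} n := by
  simp only [IsGreatest, upperBounds, Set.mem_ofPred_eq, optIter_succ_of_eq_some hxy]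
  refine ⟨fun ⟨hn, hub⟩ => ⟨hn, fun k hk => ?_⟩, fun ⟨hn, hub⟩ => ⟨hn, fun k hk => ?_⟩⟩
  · have := hub (a := k + 1) (by rwa [optIter_succ_of_eq_some hxy])
    omega
  · cases k with
    | zero => omega
    | succ k => have := hub (by rwa [optIter_succ_of_eq_some hxy] at hk); omega

theorem isSome_iff_of_isGreatest_optIter {x : α} {n : ℕ}
    (hn : IsGreatest {k | (optIter g k x).isSome} n) : (g x).isSome ↔ 0 < n := by
  rw [Option.isSome_iff_ne_none, Ne, ← isGreatest_optIter_zero_iff, Nat.pos_iff_ne_zero]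
  exact ⟨fun h h0 => h (h0 ▸ hn), fun h h0 => h (hn.unique h0)⟩

theorem eq_succ_of_isGreatest_optIter {x y : α} (hxy : g x = some y) {m n : ℕ}
    (hn : IsGreatest {k | (optIter g k x).isSome} n)
    (hm : IsGreatest {k | (optIter g k y).isSome} m) : n = m + 1 := by
  obtain ⟨k, rfl⟩ : ∃ k, n = k + 1 :=
    Nat.exists_eq_add_one.mpr ((isSome_iff_of_isGreatest_optIter hn).mp (by simp [hxy]))
  rw [(isGreatest_optIter_succ_iff hxy).mp hn |>.unique hm]

theorem exists_isGreatest_optIter {μ : α → WithTop ℤ}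
    (hstep : ∀ x y, g x = some y → μ x = μ y + 1)
    (hsome : ∀ x, μ x ≠ ⊤ → ((g x).isSome ↔ 0 < μ x)) (hnonneg : ∀ x, 0 ≤ μ x)
    {x : α} (hx : μ x ≠ ⊤) :
    ∃ n : ℕ, μ x = ((n : ℤ) : WithTop ℤ) ∧ IsGreatest {k | (optIter g k x).isSome} n := by
  obtain ⟨z, hz⟩ := WithTop.ne_top_iff_exists.mp hx
  lift z to ℕ using (by simpa [← hz] using hnonneg x)
  refine ⟨z, hz.symm, ?_⟩
  induction z generalizing x with
  | zero =>
    refine isGreatest_optIter_zero_iff.mpr (Option.not_isSome_iff_eq_none.mp ?_)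
    simp [hsome x hx, ← hz]
  | succ n ih =>
    obtain ⟨y, hy⟩ := Option.isSome_iff_exists.mp
      ((hsome x hx).mpr (by rw [← hz]; exact_mod_cast n.succ_pos))
    have hμy : μ y = ((n : ℤ) : WithTop ℤ) := by
      have := hstep x y hy
      rw [← hz] at this
      induction h : μ y using WithTop.recTopCoe with
      | top => simp [h] at this
      | coe m => rw [h] at this; norm_cast at this ⊢; omega
    exact (isGreatest_optIter_succ_iff hy).mpr (ih (by simp [hμy]) hμy.symm)

end OptIter

section Arith

theorem ite_pos_and_pos_ite_le {M α : Type*} [Zero M] [LinearOrder M] {b c : M} (hb : 0 ≤ b)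
    (hc : 0 ≤ c) (x y z : α) :
    (if 0 < b ∧ 0 < c then x else if c ≤ b then y else z) =
      if c = 0 then y else if b = 0 then z else x := by
  rcases hc.eq_or_lt with rfl | hc
  · simp [hb]
  rcases hb.eq_or_lt with rfl | hb
  · simp [hc, hc.ne', not_le.mpr hc]
  · simp [hb, hc, hb.ne', hc.ne']

theorem ite_pos_and_pos_ite_lt {M α : Type*} [Zero M] [LinearOrder M] {b c : M} (hb : 0 ≤ b)
    (hc : 0 ≤ c) (x y z : α) :
    (if 0 < b ∧ 0 < c then x else if c < b then y else z) =
      if b = 0 then z else if c = 0 then y else x := by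
  rcases hb.eq_or_lt with rfl | hb
  · simp [not_lt.mpr hc]
  rcases hc.eq_or_lt with rfl | hc
  · simp [hb, hb.ne']
  · simp [hb, hc, hb.ne', hc.ne']

namespace WithTop

theorem max_add_coe_add_coe (a b : WithTop ℤ) (p q : ℤ) :
    max (a + p + q) (b + q) = max a (b + ↑(-p)) + ↑(p + q) := by
  induction a using WithTop.recTopCoe <;> induction b using WithTop.recTopCoe <;> simp
  norm_cast
  omega

theorem max_add_coe_neg_eq_add {a b c : WithTop ℤ} {p : ℤ} (hab : b = a + p) (hb : 0 ≤ b)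
    (hc : 0 ≤ c) (h : ¬(0 < b ∧ 0 < c)) : max a (c + ↑(-p)) = a + c := by
  subst hab
  induction a using WithTop.recTopCoe <;> induction c using WithTop.recTopCoe <;> simp_all
  norm_cast at *
  omega

theorem max_add_coe_eq_add {b c d : WithTop ℤ} {q : ℤ} (hcd : d = c + q) (hb : 0 ≤ b)
    (hc : 0 ≤ c) (h : ¬(0 < b ∧ 0 < c)) : max (b + q) d = b + d := by
  subst hcd
  induction b using WithTop.recTopCoe <;> induction c using WithTop.recTopCoe <;> simp_all
  norm_cast at *
  omega

end WithTop

/-- The `⊗̈`-rule for the pairs `(ε̈, φ̈)` once seminormality has reduced the max-formulas to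
sums: the multiplication of `Z₀`, with `⊤` in the role of `0`. -/
noncomputable def qtensorSig (p q : WithTop ℤ × WithTop ℤ) : WithTop ℤ × WithTop ℤ :=
  if 0 < p.2 ∧ 0 < q.1 then ⊤ else p + q

theorem zero_qtensorSig (q : WithTop ℤ × WithTop ℤ) : qtensorSig 0 q = q := by
  simp [qtensorSig]

theorem qtensorSig_assoc {p q r : WithTop ℤ × WithTop ℤ} (hp : 0 ≤ p) (hq : 0 ≤ q) (hr : 0 ≤ r) :
    qtensorSig (qtensorSig p q) r = qtensorSig p (qtensorSig q r) := by
  obtain ⟨a, b⟩ := p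
  obtain ⟨c, d⟩ := q
  obtain ⟨e, f⟩ := r
  simp only [Prod.le_def, Prod.fst_zero, Prod.snd_zero] at hp hq hr
  rcases hp.2.eq_or_lt with rfl | hb <;> rcases hq.1.eq_or_lt with rfl | hc <;>
    rcases hq.2.eq_or_lt with rfl | hd <;> rcases hr.1.eq_or_lt with rfl | he <;>
    simp [qtensorSig, *, add_pos_of_pos_of_nonneg, add_assoc, Prod.ext_iff]

end Arith

namespace QCSetting

variable (S : QCSetting V ι)

theorem pair_zero (i : ι) : S.pair 0 i = 0 := by
  have h : (S.pair 0 i : ℝ) = 0 := by simp [S.pair_spec]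
  exact_mod_cast h

theorem pair_add (a b : S.Λ) (i : ι) : S.pair (a + b) i = S.pair a i + S.pair b i := by
  have h : (S.pair (a + b) i : ℝ) = S.pair a i + S.pair b i := by
    rw [S.pair_spec, S.pair_spec, S.pair_spec, AddSubgroup.coe_add, inner_add_left, mul_add,
      add_div]
  exact_mod_cast h

end QCSetting

namespace QC

variable {S : QCSetting V ι} {Q : Type*} {𝒬 : QC S Q}

theorem IsSeminormal.eps_nonneg (h : 𝒬.IsSeminormal) (i : ι) (x : Q) : 0 ≤ 𝒬.ε i x := by
  by_cases ht : 𝒬.ε i x = ⊤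
  · simp [ht]
  · obtain ⟨n, hn, -⟩ := h.eps_spec i x ht
    rw [hn]
    exact_mod_cast n.cast_nonneg

theorem IsSeminormal.phi_nonneg (h : 𝒬.IsSeminormal) (i : ι) (x : Q) : 0 ≤ 𝒬.φ i x := by
  by_cases ht : 𝒬.ε i x = ⊤
  · simp [h.phi_eq, ht]
  · obtain ⟨n, hn, -⟩ := h.phi_spec i x ht
    rw [hn]
    exact_mod_cast n.cast_nonneg

theorem IsSeminormal.isSome_e_iff (h : 𝒬.IsSeminormal) (i : ι) (x : Q) :
    (𝒬.e i x).isSome ↔ 0 < 𝒬.ε i x ∧ 𝒬.ε i x ≠ ⊤ := by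
  by_cases ht : 𝒬.ε i x = ⊤
  · simp [ht, h.e_of_top i x ht]
  · obtain ⟨n, hn, hg⟩ := h.eps_spec i x ht
    simp [isSome_iff_of_isGreatest_optIter hg, hn]

theorem IsSeminormal.isSome_f_iff (h : 𝒬.IsSeminormal) (i : ι) (x : Q) :
    (𝒬.f i x).isSome ↔ 0 < 𝒬.φ i x ∧ 𝒬.ε i x ≠ ⊤ := by
  by_cases ht : 𝒬.ε i x = ⊤
  · simp [ht, h.f_of_top i x ht]
  · obtain ⟨n, hn, hg⟩ := h.phi_spec i x ht
    simp [isSome_iff_of_isGreatest_optIter hg, hn, ht]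

theorem IsSeminormal.eps_eq_add_one_of_e (h : 𝒬.IsSeminormal) {i : ι} {x y : Q}
    (hxy : 𝒬.e i x = some y) : 𝒬.ε i x = 𝒬.ε i y + 1 := by
  have hyx := (h.e_iff_f i x y).mp hxy
  obtain ⟨n, hn, hgx⟩ := h.eps_spec i x fun ht => by simp [h.e_of_top i x ht] at hxy
  obtain ⟨m, hm, hgy⟩ := h.eps_spec i y fun ht => by simp [h.f_of_top i y ht] at hyx
  rw [hn, hm, eq_succ_of_isGreatest_optIter hxy hgx hgy]
  norm_cast

theorem IsSeminormal.phi_eq_add_one_of_f (h : 𝒬.IsSeminormal) {i : ι} {x y : Q}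
    (hxy : 𝒬.f i x = some y) : 𝒬.φ i x = 𝒬.φ i y + 1 := by
  have hyx := (h.e_iff_f i y x).mpr hxy
  obtain ⟨n, hn, hgx⟩ := h.phi_spec i x fun ht => by simp [h.f_of_top i x ht] at hxy
  obtain ⟨m, hm, hgy⟩ := h.phi_spec i y fun ht => by simp [h.e_of_top i y ht] at hyx
  rw [hn, hm, eq_succ_of_isGreatest_optIter hxy hgx hgy]
  norm_cast

theorem IsSeminormal.of_step
    (phi_eq : ∀ i x, 𝒬.φ i x = 𝒬.ε i x + ((S.pair (𝒬.wt x) i : ℤ) : WithTop ℤ))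
    (wt_e : ∀ i x y, 𝒬.e i x = some y → (𝒬.wt y : V) = (𝒬.wt x : V) + S.simple i)
    (e_iff_f : ∀ i x y, 𝒬.e i x = some y ↔ 𝒬.f i y = some x)
    (eps_nonneg : ∀ i x, 0 ≤ 𝒬.ε i x) (phi_nonneg : ∀ i x, 0 ≤ 𝒬.φ i x)
    (eps_step : ∀ i x y, 𝒬.e i x = some y → 𝒬.ε i x = 𝒬.ε i y + 1)
    (phi_step : ∀ i x y, 𝒬.f i x = some y → 𝒬.φ i x = 𝒬.φ i y + 1)
    (isSome_e : ∀ i x, (𝒬.e i x).isSome ↔ 0 < 𝒬.ε i x ∧ 𝒬.ε i x ≠ ⊤)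
    (isSome_f : ∀ i x, (𝒬.f i x).isSome ↔ 0 < 𝒬.φ i x ∧ 𝒬.ε i x ≠ ⊤) :
    𝒬.IsSeminormal where
  phi_eq := phi_eq
  wt_e := wt_e
  wt_f i x y hxy := by
    rw [wt_e i y x ((e_iff_f i y x).mpr hxy)]
    abel
  e_iff_f := e_iff_f
  e_of_top i x ht := Option.not_isSome_iff_eq_none.mp (by simp [isSome_e, ht])
  f_of_top i x ht := Option.not_isSome_iff_eq_none.mp (by simp [isSome_f, ht])
  eps_spec i x := exists_isGreatest_optIter (eps_step i) (fun x hx => by simp [isSome_e, hx])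
    (eps_nonneg i)
  phi_spec i x hx := by
    have hφ : ∀ x, 𝒬.φ i x ≠ ⊤ ↔ 𝒬.ε i x ≠ ⊤ := fun x => by simp [phi_eq]
    exact exists_isGreatest_optIter (phi_step i) (fun x hx => by simp [isSome_f, (hφ x).mp hx])
      (phi_nonneg i) ((hφ x).mpr hx)

end QC

section FreeWords

variable {S : QCSetting V ι} {Q : Type*} {𝒬 : QC S Q}

theorem freeWt_append (l₁ l₂ : List Q) : freeWt 𝒬 (l₁ ++ l₂) = freeWt 𝒬 l₁ + freeWt 𝒬 l₂ := by
  induction l₁ with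
  | nil => simp [freeWt]
  | cons x t ih => simp [freeWt, ih, add_assoc]

theorem qfreeEps_nonneg (h : 𝒬.IsSeminormal) (i : ι) : ∀ l : List Q, 0 ≤ qfreeEps 𝒬 i l
  | [] => le_rfl
  | x :: l => by
    rw [qfreeEps]
    split_ifs
    · exact le_top
    · exact (h.eps_nonneg i x).trans (le_max_left _ _)

theorem qfreePhi_nonneg (h : 𝒬.IsSeminormal) (i : ι) : ∀ l : List Q, 0 ≤ qfreePhi 𝒬 i l
  | [] => le_rfl
  | x :: l => by
    rw [qfreePhi]
    split_ifs
    · exact le_top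
    · exact (qfreePhi_nonneg h i l).trans (le_max_right _ _)

theorem qfreePhi_eq (h : 𝒬.IsSeminormal) (i : ι) :
    ∀ l : List Q, qfreePhi 𝒬 i l = qfreeEps 𝒬 i l + ((S.pair (freeWt 𝒬 l) i : ℤ) : WithTop ℤ)
  | [] => by simp [qfreePhi, qfreeEps, freeWt, S.pair_zero]
  | x :: l => by
    rw [qfreePhi, qfreeEps, freeWt, S.pair_add]
    split_ifs
    · simp
    · rw [h.phi_eq, qfreePhi_eq h i l, WithTop.max_add_coe_add_coe]

theorem qfreeEps_cons (h : 𝒬.IsSeminormal) (i : ι) (x : Q) (l : List Q) :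
    qfreeEps 𝒬 i (x :: l) =
      if 0 < 𝒬.φ i x ∧ 0 < qfreeEps 𝒬 i l then ⊤ else 𝒬.ε i x + qfreeEps 𝒬 i l := by
  rw [qfreeEps]
  split_ifs with hb
  · rfl
  · exact WithTop.max_add_coe_neg_eq_add (h.phi_eq i x) (h.phi_nonneg i x)
      (qfreeEps_nonneg h i l) hb

theorem qfreePhi_cons (h : 𝒬.IsSeminormal) (i : ι) (x : Q) (l : List Q) :
    qfreePhi 𝒬 i (x :: l) =
      if 0 < 𝒬.φ i x ∧ 0 < qfreeEps 𝒬 i l then ⊤ else 𝒬.φ i x + qfreePhi 𝒬 i l := by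
  rw [qfreePhi]
  split_ifs with hb
  · rfl
  · exact WithTop.max_add_coe_eq_add (qfreePhi_eq h i l) (h.phi_nonneg i x)
      (qfreeEps_nonneg h i l) hb

theorem qfreeEps_qfreePhi_append (h : 𝒬.IsSeminormal) (i : ι) (l₁ l₂ : List Q) :
    (qfreeEps 𝒬 i (l₁ ++ l₂), qfreePhi 𝒬 i (l₁ ++ l₂)) =
      qtensorSig (qfreeEps 𝒬 i l₁, qfreePhi 𝒬 i l₁) (qfreeEps 𝒬 i l₂, qfreePhi 𝒬 i l₂) := by
  have hnonneg : ∀ l, 0 ≤ (qfreeEps 𝒬 i l, qfreePhi 𝒬 i l) := fun l =>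
    ⟨qfreeEps_nonneg h i l, qfreePhi_nonneg h i l⟩
  have hcons : ∀ x l, (qfreeEps 𝒬 i (x :: l), qfreePhi 𝒬 i (x :: l)) =
      qtensorSig (𝒬.ε i x, 𝒬.φ i x) (qfreeEps 𝒬 i l, qfreePhi 𝒬 i l) := fun x l => by
    rw [qfreeEps_cons h, qfreePhi_cons h, qtensorSig]
    split_ifs <;> rfl
  induction l₁ with
  | nil => exact (zero_qtensorSig _).symm
  | cons x t ih =>
    rw [List.cons_append, hcons, ih, hcons,
      qtensorSig_assoc ⟨h.eps_nonneg i x, h.phi_nonneg i x⟩ (hnonneg t) (hnonneg l₂)]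

theorem qfreeEps_append (h : 𝒬.IsSeminormal) (i : ι) (l₁ l₂ : List Q) :
    qfreeEps 𝒬 i (l₁ ++ l₂) = if 0 < qfreePhi 𝒬 i l₁ ∧ 0 < qfreeEps 𝒬 i l₂ then ⊤
      else qfreeEps 𝒬 i l₁ + qfreeEps 𝒬 i l₂ := by
  refine (congrArg Prod.fst (qfreeEps_qfreePhi_append h i l₁ l₂)).trans ?_
  rw [qtensorSig]
  split_ifs <;> rfl

theorem qfreePhi_append (h : 𝒬.IsSeminormal) (i : ι) (l₁ l₂ : List Q) :
    qfreePhi 𝒬 i (l₁ ++ l₂) = if 0 < qfreePhi 𝒬 i l₁ ∧ 0 < qfreeEps 𝒬 i l₂ then ⊤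
      else qfreePhi 𝒬 i l₁ + qfreePhi 𝒬 i l₂ := by
  refine (congrArg Prod.snd (qfreeEps_qfreePhi_append h i l₁ l₂)).trans ?_
  rw [qtensorSig]
  split_ifs <;> rfl

theorem qfreeE_cons (h : 𝒬.IsSeminormal) (i : ι) (x : Q) (l : List Q) :
    qfreeE 𝒬 i (x :: l) = if qfreeEps 𝒬 i l = 0 then (𝒬.e i x).map (· :: l)
      else if 𝒬.φ i x = 0 then (qfreeE 𝒬 i l).map (x :: ·) else none := by
  rw [qfreeE, ite_pos_and_pos_ite_le (h.phi_nonneg i x) (qfreeEps_nonneg h i l)]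

theorem qfreeF_cons (h : 𝒬.IsSeminormal) (i : ι) (x : Q) (l : List Q) :
    qfreeF 𝒬 i (x :: l) = if 𝒬.φ i x = 0 then (qfreeF 𝒬 i l).map (x :: ·)
      else if qfreeEps 𝒬 i l = 0 then (𝒬.f i x).map (· :: l) else none := by
  rw [qfreeF, ite_pos_and_pos_ite_lt (h.phi_nonneg i x) (qfreeEps_nonneg h i l)]

theorem qfreeE_isSome_iff (h : 𝒬.IsSeminormal) (i : ι) :
    ∀ l : List Q, (qfreeE 𝒬 i l).isSome ↔ 0 < qfreeEps 𝒬 i l ∧ qfreeEps 𝒬 i l ≠ ⊤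
  | [] => by simp [qfreeE, qfreeEps]
  | x :: l => by
    have hl := qfreeEps_nonneg h i l
    rw [qfreeE_cons h, qfreeEps_cons h]
    by_cases hl0 : qfreeEps 𝒬 i l = 0
    · simp [hl0, h.isSome_e_iff]
    by_cases hx0 : 𝒬.φ i x = 0
    · have hx : 𝒬.ε i x ≠ ⊤ := fun hx => by simp [h.phi_eq, hx] at hx0
      have hl' : 0 < qfreeEps 𝒬 i l := hl.lt_of_ne' hl0
      simp [hl0, hx0, qfreeE_isSome_iff h i l, hl', hx,
        hl'.trans_le (le_add_of_nonneg_left (h.eps_nonneg i x))]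
    · simp [hl0, hx0, (h.phi_nonneg i x).lt_of_ne' hx0, hl.lt_of_ne' hl0]

theorem qfreeF_isSome_iff (h : 𝒬.IsSeminormal) (i : ι) :
    ∀ l : List Q, (qfreeF 𝒬 i l).isSome ↔ 0 < qfreePhi 𝒬 i l ∧ qfreeEps 𝒬 i l ≠ ⊤
  | [] => by simp [qfreeF, qfreePhi]
  | x :: l => by
    have hl := qfreeEps_nonneg h i l
    rw [qfreeF_cons h, qfreeEps_cons h, qfreePhi_cons h]
    by_cases hx0 : 𝒬.φ i x = 0
    · have hx : 𝒬.ε i x ≠ ⊤ := fun hx => by simp [h.phi_eq, hx] at hx0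
      simp [hx0, qfreeF_isSome_iff h i l, hx]
    by_cases hl0 : qfreeEps 𝒬 i l = 0
    · have hx' : 0 < 𝒬.φ i x := (h.phi_nonneg i x).lt_of_ne' hx0
      simp [hl0, hx0, h.isSome_f_iff, hx',
        hx'.trans_le (le_add_of_nonneg_right (qfreePhi_nonneg h i l))]
    · simp [hl0, hx0, (h.phi_nonneg i x).lt_of_ne' hx0, hl.lt_of_ne' hl0]

theorem qfreeE_eq_some (h : 𝒬.IsSeminormal) {i : ι} :
    ∀ {l l' : List Q}, qfreeE 𝒬 i l = some l' →
      qfreeEps 𝒬 i l = qfreeEps 𝒬 i l' + 1 ∧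
      (freeWt 𝒬 l' : V) = (freeWt 𝒬 l : V) + S.simple i ∧ qfreeF 𝒬 i l' = some l
  | [], _, hE => by simp [qfreeE] at hE
  | x :: t, l', hE => by
    rw [qfreeE_cons h] at hE
    split_ifs at hE with ht0 hx0
    · obtain ⟨y, hxy, rfl⟩ := Option.map_eq_some_iff.mp hE
      have hyx := (h.e_iff_f i x y).mp hxy
      have hy : 0 < 𝒬.φ i y := ((h.isSome_f_iff i y).mp (by simp [hyx])).1
      refine ⟨?_, ?_, ?_⟩
      · rw [qfreeEps_cons h, qfreeEps_cons h, if_neg (by simp [ht0]), if_neg (by simp [ht0]),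
          h.eps_eq_add_one_of_e hxy, add_right_comm]
      · simp only [freeWt, AddSubgroup.coe_add, h.wt_e i x y hxy]
        abel
      · rw [qfreeF_cons h, if_neg hy.ne', if_pos ht0, hyx]
        rfl
    · obtain ⟨t', htt', rfl⟩ := Option.map_eq_some_iff.mp hE
      obtain ⟨heps, hwt, hF⟩ := qfreeE_eq_some h htt'
      refine ⟨?_, ?_, ?_⟩
      · rw [qfreeEps_cons h, qfreeEps_cons h, if_neg (by simp [hx0]), if_neg (by simp [hx0]),
          heps, add_assoc]
      · simp only [freeWt, AddSubgroup.coe_add, hwt]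
        abel
      · rw [qfreeF_cons h, if_pos hx0, hF]
        rfl

theorem qfreeF_eq_some (h : 𝒬.IsSeminormal) {i : ι} :
    ∀ {l l' : List Q}, qfreeF 𝒬 i l = some l' →
      qfreePhi 𝒬 i l = qfreePhi 𝒬 i l' + 1 ∧ qfreeE 𝒬 i l' = some l
  | [], _, hF => by simp [qfreeF] at hF
  | x :: t, l', hF => by
    rw [qfreeF_cons h] at hF
    split_ifs at hF with hx0 ht0
    · obtain ⟨t', htt', rfl⟩ := Option.map_eq_some_iff.mp hF
      obtain ⟨hphi, hE⟩ := qfreeF_eq_some h htt'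
      have ht' : 0 < qfreeEps 𝒬 i t' := by
        rw [(qfreeE_eq_some h hE).1]
        exact zero_lt_one.trans_le (le_add_of_nonneg_left (qfreeEps_nonneg h i t))
      refine ⟨?_, ?_⟩
      · rw [qfreePhi_cons h, qfreePhi_cons h, if_neg (by simp [hx0]), if_neg (by simp [hx0]),
          hphi, add_assoc]
      · rw [qfreeE_cons h, if_neg ht'.ne', if_pos hx0, hE]
        rfl
    · obtain ⟨y, hxy, rfl⟩ := Option.map_eq_some_iff.mp hF
      refine ⟨?_, ?_⟩
      · rw [qfreePhi_cons h, qfreePhi_cons h, if_neg (by simp [ht0]), if_neg (by simp [ht0]),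
          h.phi_eq_add_one_of_f hxy, add_right_comm]
      · rw [qfreeE_cons h, if_pos ht0, (h.e_iff_f i y x).mpr hxy]
        rfl

theorem qfreePhi_cons_eq_zero_iff (h : 𝒬.IsSeminormal) {i : ι} {x : Q} {l : List Q} :
    qfreePhi 𝒬 i (x :: l) = 0 ↔ 𝒬.φ i x = 0 ∧ qfreePhi 𝒬 i l = 0 := by
  rw [qfreePhi_cons h]
  split_ifs with hb
  · simp [hb.1.ne']
  · exact add_eq_zero_iff_of_nonneg (h.phi_nonneg i x) (qfreePhi_nonneg h i l)

theorem qfreeE_append_of_eps_eq_zero (h : 𝒬.IsSeminormal) {i : ι} {v : List Q}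
    (hv : qfreeEps 𝒬 i v = 0) : ∀ u : List Q, qfreeE 𝒬 i (u ++ v) = (qfreeE 𝒬 i u).map (· ++ v)
  | [] => by
    simpa [qfreeE, hv] using qfreeE_isSome_iff h i v
  | x :: t => by
    have ht : qfreeEps 𝒬 i (t ++ v) = qfreeEps 𝒬 i t := by
      rw [qfreeEps_append h, if_neg (by simp [hv]), hv, add_zero]
    rw [List.cons_append, qfreeE_cons h, qfreeE_cons h, ht, qfreeE_append_of_eps_eq_zero h hv t]
    split_ifs <;> simp [Option.map_map, Function.comp_def]

theorem qfreeE_append_of_phi_eq_zero (h : 𝒬.IsSeminormal) {i : ι} {v : List Q}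
    (hv : 0 < qfreeEps 𝒬 i v) :
    ∀ u : List Q, qfreePhi 𝒬 i u = 0 → qfreeE 𝒬 i (u ++ v) = (qfreeE 𝒬 i v).map (u ++ ·)
  | [], _ => by simp
  | x :: t, hu => by
    obtain ⟨hx0, ht0⟩ := (qfreePhi_cons_eq_zero_iff h).mp hu
    have htv : qfreeEps 𝒬 i (t ++ v) ≠ 0 := by
      rw [qfreeEps_append h, if_neg (by simp [ht0])]
      exact (hv.trans_le (le_add_of_nonneg_left (qfreeEps_nonneg h i t))).ne'
    rw [List.cons_append, qfreeE_cons h, if_neg htv, if_pos hx0,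
      qfreeE_append_of_phi_eq_zero h hv t ht0]
    simp [Option.map_map, Function.comp_def]

theorem qfreeF_append_of_eps_eq_zero (h : 𝒬.IsSeminormal) {i : ι} {v : List Q}
    (hv : qfreeEps 𝒬 i v = 0) :
    ∀ u : List Q, 0 < qfreePhi 𝒬 i u → qfreeF 𝒬 i (u ++ v) = (qfreeF 𝒬 i u).map (· ++ v)
  | [], hu => by simp [qfreePhi] at hu
  | x :: t, hu => by
    have ht : qfreeEps 𝒬 i (t ++ v) = qfreeEps 𝒬 i t := by
      rw [qfreeEps_append h, if_neg (by simp [hv]), hv, add_zero]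
    rw [List.cons_append, qfreeF_cons h, qfreeF_cons h, ht]
    by_cases hx0 : 𝒬.φ i x = 0
    · have ht0 : 0 < qfreePhi 𝒬 i t := by
        rwa [qfreePhi_cons h, if_neg (by simp [hx0]), hx0, zero_add] at hu
      simp [hx0, qfreeF_append_of_eps_eq_zero h hv t ht0, Option.map_map, Function.comp_def]
    · simp only [hx0, if_false]
      split_ifs <;> simp [Option.map_map, Function.comp_def]

theorem qfreeF_append_of_phi_eq_zero (h : 𝒬.IsSeminormal) {i : ι} {v : List Q} :
    ∀ u : List Q, qfreePhi 𝒬 i u = 0 → qfreeF 𝒬 i (u ++ v) = (qfreeF 𝒬 i v).map (u ++ ·)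
  | [], _ => by simp
  | x :: t, hu => by
    obtain ⟨hx0, ht0⟩ := (qfreePhi_cons_eq_zero_iff h).mp hu
    rw [List.cons_append, qfreeF_cons h, if_pos hx0, qfreeF_append_of_phi_eq_zero h t ht0]
    simp [Option.map_map, Function.comp_def]

theorem qfreeE_append (h : 𝒬.IsSeminormal) (i : ι) (u v : List Q) :
    qfreeE 𝒬 i (u ++ v) = if qfreeEps 𝒬 i v = 0 then (qfreeE 𝒬 i u).map (· ++ v)
      else if qfreePhi 𝒬 i u = 0 then (qfreeE 𝒬 i v).map (u ++ ·) else none := by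
  have hu := qfreePhi_nonneg h i u
  have hv := qfreeEps_nonneg h i v
  split_ifs with hv0 hu0
  · exact qfreeE_append_of_eps_eq_zero h hv0 u
  · exact qfreeE_append_of_phi_eq_zero h (hv.lt_of_ne' hv0) u hu0
  · refine Option.not_isSome_iff_eq_none.mp ?_
    rw [qfreeE_isSome_iff h, qfreeEps_append h, if_pos ⟨hu.lt_of_ne' hu0, hv.lt_of_ne' hv0⟩]
    simp

theorem qfreeF_append (h : 𝒬.IsSeminormal) (i : ι) (u v : List Q) :
    qfreeF 𝒬 i (u ++ v) = if qfreePhi 𝒬 i u = 0 then (qfreeF 𝒬 i v).map (u ++ ·)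
      else if qfreeEps 𝒬 i v = 0 then (qfreeF 𝒬 i u).map (· ++ v) else none := by
  have hu := qfreePhi_nonneg h i u
  have hv := qfreeEps_nonneg h i v
  split_ifs with hu0 hv0
  · exact qfreeF_append_of_phi_eq_zero h u hu0
  · exact qfreeF_append_of_eps_eq_zero h hv0 u (hu.lt_of_ne' hu0)
  · refine Option.not_isSome_iff_eq_none.mp ?_
    rw [qfreeF_isSome_iff h, qfreeEps_append h, if_pos ⟨hu.lt_of_ne' hu0, hv.lt_of_ne' hv0⟩]
    simp

end FreeWords

def QCHom.ofMap {S : QCSetting V ι} {Q Q' : Type*} {𝒬 : QC S Q} {𝒬' : QC S Q'} (ψ : Q → Q')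
    (wt_map : ∀ x, 𝒬'.wt (ψ x) = 𝒬.wt x) (ε_map : ∀ i x, 𝒬'.ε i (ψ x) = 𝒬.ε i x)
    (φ_map : ∀ i x, 𝒬'.φ i (ψ x) = 𝒬.φ i x)
    (e_map : ∀ i x, 𝒬'.e i (ψ x) = (𝒬.e i x).map ψ)
    (f_map : ∀ i x, 𝒬'.f i (ψ x) = (𝒬.f i x).map ψ) : QCHom 𝒬 𝒬' where
  toFun := Option.map ψ
  map_none := rfl
  wt_eq x _ hxy := Option.some_injective _ hxy ▸ wt_map x
  eps_eq i x _ hxy := Option.some_injective _ hxy ▸ ε_map i x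
  phi_eq i x _ hxy := Option.some_injective _ hxy ▸ φ_map i x
  comm_e i x x' _ _ hxx' hxy hxy' := by
    rw [← Option.some_injective _ hxy, ← Option.some_injective _ hxy', e_map, hxx']
    rfl
  comm_f i x x' _ _ hxx' hxy hxy' := by
    rw [← Option.some_injective _ hxy, ← Option.some_injective _ hxy', f_map, hxx']
    rfl

section FreeQTensorQC

variable {S : QCSetting V ι} {Q : Type*} {𝒬 : QC S Q}

@[simp] theorem freeQTensorQC_wt (w : FreeMonoid Q) :
    (freeQTensorQC 𝒬).wt w = freeWt 𝒬 w.toList := rfl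

@[simp] theorem freeQTensorQC_ε (i : ι) (w : FreeMonoid Q) :
    (freeQTensorQC 𝒬).ε i w = qfreeEps 𝒬 i w.toList := rfl

@[simp] theorem freeQTensorQC_φ (i : ι) (w : FreeMonoid Q) :
    (freeQTensorQC 𝒬).φ i w = qfreePhi 𝒬 i w.toList := rfl

@[simp] theorem freeQTensorQC_e (i : ι) (w : FreeMonoid Q) :
    (freeQTensorQC 𝒬).e i w = (qfreeE 𝒬 i w.toList).map FreeMonoid.ofList := rfl

@[simp] theorem freeQTensorQC_f (i : ι) (w : FreeMonoid Q) :
    (freeQTensorQC 𝒬).f i w = (qfreeF 𝒬 i w.toList).map FreeMonoid.ofList := rfl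

theorem freeQTensorQC_e_eq_some {i : ι} {u v : FreeMonoid Q} :
    (freeQTensorQC 𝒬).e i u = some v ↔ qfreeE 𝒬 i u.toList = some v.toList := by
  simp only [freeQTensorQC_e, Option.map_eq_some_iff]
  exact ⟨fun ⟨_, hE, huv⟩ => huv ▸ hE, fun hE => ⟨_, hE, rfl⟩⟩

theorem freeQTensorQC_f_eq_some {i : ι} {u v : FreeMonoid Q} :
    (freeQTensorQC 𝒬).f i u = some v ↔ qfreeF 𝒬 i u.toList = some v.toList := by
  simp only [freeQTensorQC_f, Option.map_eq_some_iff]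
  exact ⟨fun ⟨_, hE, huv⟩ => huv ▸ hE, fun hE => ⟨_, hE, rfl⟩⟩

theorem freeQTensorQC_isSeminormal (h : 𝒬.IsSeminormal) : (freeQTensorQC 𝒬).IsSeminormal :=
  QC.IsSeminormal.of_step (fun i u => qfreePhi_eq h i u.toList)
    (fun _ _ _ huv => (qfreeE_eq_some h (freeQTensorQC_e_eq_some.mp huv)).2.1)
    (fun _ _ _ => by
      rw [freeQTensorQC_e_eq_some, freeQTensorQC_f_eq_some]
      exact ⟨fun hE => (qfreeE_eq_some h hE).2.2, fun hF => (qfreeF_eq_some h hF).2⟩)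
    (fun i u => qfreeEps_nonneg h i u.toList) (fun i u => qfreePhi_nonneg h i u.toList)
    (fun _ _ _ huv => (qfreeE_eq_some h (freeQTensorQC_e_eq_some.mp huv)).1)
    (fun _ _ _ huv => (qfreeF_eq_some h (freeQTensorQC_f_eq_some.mp huv)).1)
    (fun i u => by simpa using qfreeE_isSome_iff h i u.toList)
    (fun i u => by simpa using qfreeF_isSome_iff h i u.toList)

theorem freeQTensorQC_wt_mul (u v : FreeMonoid Q) :
    (freeQTensorQC 𝒬).wt (u * v) = ((freeQTensorQC 𝒬).qtensor (freeQTensorQC 𝒬)).wt (u, v) := by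
  simp [QC.qtensor, freeWt_append]

theorem freeQTensorQC_eps_mul (h : 𝒬.IsSeminormal) (i : ι) (u v : FreeMonoid Q) :
    (freeQTensorQC 𝒬).ε i (u * v) = ((freeQTensorQC 𝒬).qtensor (freeQTensorQC 𝒬)).ε i (u, v) := by
  by_cases hb : 0 < qfreePhi 𝒬 i u.toList ∧ 0 < qfreeEps 𝒬 i v.toList
  · simp [QC.qtensor, qfreeEps_append h, hb]
  · simp only [QC.qtensor, freeQTensorQC_ε, freeQTensorQC_φ, freeQTensorQC_wt,
      FreeMonoid.toList_mul, qfreeEps_append h, hb, if_false]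
    exact WithTop.max_add_coe_neg_eq_add (qfreePhi_eq h i _) (qfreePhi_nonneg h i _)
      (qfreeEps_nonneg h i _) hb |>.symm

theorem freeQTensorQC_phi_mul (h : 𝒬.IsSeminormal) (i : ι) (u v : FreeMonoid Q) :
    (freeQTensorQC 𝒬).φ i (u * v) = ((freeQTensorQC 𝒬).qtensor (freeQTensorQC 𝒬)).φ i (u, v) := by
  by_cases hb : 0 < qfreePhi 𝒬 i u.toList ∧ 0 < qfreeEps 𝒬 i v.toList
  · simp [QC.qtensor, qfreePhi_append h, hb]
  · simp only [QC.qtensor, freeQTensorQC_ε, freeQTensorQC_φ, freeQTensorQC_wt,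
      FreeMonoid.toList_mul, qfreePhi_append h, hb, if_false]
    exact WithTop.max_add_coe_eq_add (qfreePhi_eq h i _) (qfreePhi_nonneg h i _)
      (qfreeEps_nonneg h i _) hb |>.symm

theorem freeQTensorQC_e_mul (h : 𝒬.IsSeminormal) (i : ι) (u v : FreeMonoid Q) :
    (freeQTensorQC 𝒬).e i (u * v) =
      (((freeQTensorQC 𝒬).qtensor (freeQTensorQC 𝒬)).e i (u, v)).map (fun p => p.1 * p.2) := by
  have hu := qfreePhi_nonneg h i u.toList
  rcases (qfreeEps_nonneg h i v.toList).eq_or_lt with hv0 | hv0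
  · simp [QC.qtensor, qfreeE_append h, ← hv0, hu, Option.map_map, Function.comp_def]
  rcases hu.eq_or_lt with hu0 | hu0
  · simp [QC.qtensor, qfreeE_append h, ← hu0, hv0, hv0.ne', not_le.mpr hv0, Option.map_map,
      Function.comp_def]
  · simp [QC.qtensor, qfreeE_append h, hu0, hv0, hu0.ne', hv0.ne']

theorem freeQTensorQC_f_mul (h : 𝒬.IsSeminormal) (i : ι) (u v : FreeMonoid Q) :
    (freeQTensorQC 𝒬).f i (u * v) =
      (((freeQTensorQC 𝒬).qtensor (freeQTensorQC 𝒬)).f i (u, v)).map (fun p => p.1 * p.2) := by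
  have hv := qfreeEps_nonneg h i v.toList
  rcases (qfreePhi_nonneg h i u.toList).eq_or_lt with hu0 | hu0
  · simp [QC.qtensor, qfreeF_append h, ← hu0, not_lt.mpr hv, Option.map_map, Function.comp_def]
  rcases hv.eq_or_lt with hv0 | hv0
  · simp [QC.qtensor, qfreeF_append h, ← hv0, hu0, hu0.ne', Option.map_map, Function.comp_def]
  · simp [QC.qtensor, qfreeF_append h, hu0, hv0, hu0.ne', hv0.ne']

end FreeQTensorQC

/-- The free `⊗̈`-quasi-crystal monoid `F^⊗̈(Q)` over a seminormal
quasi-crystal `Q` is a `⊗̈`-quasi-crystal monoid: its structure maps make `Q*` a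
seminormal quasi-crystal, and `u ⊗̈ v ↦ uv` induces a quasi-crystal homomorphism
`F^⊗̈(Q) ⊗̈ F^⊗̈(Q) → F^⊗̈(Q)`. -/
theorem freeQTensor_isQTensorQCMon {V : Type*} [NormedAddCommGroup V]
    [InnerProductSpace ℝ V] {ι : Type*} {S : QCSetting V ι} {Q : Type*}
    (𝒬 : QC S Q) (h : 𝒬.IsSeminormal) :
    (freeQTensorQC 𝒬).IsSeminormal ∧
    ∃ ψ : QCHom ((freeQTensorQC 𝒬).qtensor (freeQTensorQC 𝒬)) (freeQTensorQC 𝒬),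
      ψ.toFun = Option.map (fun p => p.1 * p.2) :=
  ⟨freeQTensorQC_isSeminormal h,
    QCHom.ofMap (fun p => p.1 * p.2) (fun p => freeQTensorQC_wt_mul p.1 p.2)
      (fun i p => freeQTensorQC_eps_mul h i p.1 p.2) (fun i p => freeQTensorQC_phi_mul h i p.1 p.2)
      (fun i p => freeQTensorQC_e_mul h i p.1 p.2) (fun i p => freeQTensorQC_f_mul h i p.1 p.2),
    rfl⟩
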